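/- Let a and b be coprime positive integers with a + b odd, and define Q(a;b) := 6·(s(a;2b) + s(2a;b) − 2·s(a;b)). Then Q(a + 2b; b) = Q(a; b). -/
import Mathlib


open Finset Real

/-- The classical Dedekind sum `s(a;b)` defined by the cotangent sum. -/
noncomputable def dedekindS (a : ℤ) (b : ℕ) : ℝ :=
  (1 / (4 * (b : ℝ))) * ∑ ν ∈ Finset.Ico 1 b,
    Real.cot (Real.pi * a * ν / b) * Real.cot (Real.pi * ν / b)

/-- The rational part `Q(a;b)` of the elliptic classical Dedekind sum. -/
noncomputable def Qpart (a b : ℕ) : ℝ :=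
  6 * (dedekindS a (2 * b) + dedekindS (2 * a) b - 2 * dedekindS a b)

lemma cot_periodic' : Function.Periodic Real.cot π := by
  intro x
  simp [Real.cot_eq_cos_div_sin, Real.cos_add_pi, Real.sin_add_pi, neg_div_neg_eq]

lemma cot_add_int_mul_pi (x : ℝ) (n : ℤ) : Real.cot (x + n * π) = Real.cot x :=
  cot_periodic'.int_mul n x

lemma dedekindS_periodic (a k : ℤ) (b : ℕ) :
    dedekindS (a + k * b) b = dedekindS a b := by
  rcases Nat.eq_zero_or_pos b with rfl | hb
  · simp [dedekindS]
  unfold dedekindS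
  congr 1
  apply Finset.sum_congr rfl
  intro ν _
  have hb' : (b : ℝ) ≠ 0 := Nat.cast_ne_zero.mpr hb.ne'
  have key : Real.cot (Real.pi * ((a : ℝ) + k * b) * ν / b)
      = Real.cot (Real.pi * a * ν / b) := by
    have h : Real.pi * ((a : ℝ) + k * b) * ν / b
        = Real.pi * a * ν / b + ((k * ν : ℤ) : ℝ) * Real.pi := by
      push_cast; field_simp
    rw [h, cot_add_int_mul_pi]
  push_cast
  rw [key]

theorem Qpart_even_reduction (a b : ℕ) (ha : 0 < a) (hb : 0 < b) (hcop : Nat.gcd a b = 1)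
    (hodd : Odd (a + b)) :
    Qpart (a + 2 * b) b = Qpart a b := by
  unfold Qpart
  have h1 : dedekindS ((a : ℤ) + 2 * b) (2 * b) = dedekindS a (2 * b) := by
    have := dedekindS_periodic (a : ℤ) 1 (2 * b)
    simpa using this
  have h2 : dedekindS (2 * ((a : ℤ) + 2 * b)) b = dedekindS (2 * a) b := by
    have := dedekindS_periodic (2 * a : ℤ) 4 b
    rw [← this]; ring_nf
  have h3 : dedekindS ((a : ℤ) + 2 * b) b = dedekindS a b := by
    have := dedekindS_periodic (a : ℤ) 2 b
    simpa using this
  push_cast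
  rw [h1, h2, h3]
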